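/- arXiv:math-ph/9905001 — 2 statements merged into one kernel-verified Lean document; each statement's English description precedes it below -/
import Mathlib

section
/- Eigenvalue decomposition of the general self-adjoint second-order leading symbol on trace-free symmetric two-tensors: for all real numbers α₀, α₂ the operator α₀·id + 2α₂·Y₂ on Sym²₀(ℝ^m) satisfies (α₀·id + 2α₂·Y₂) ∘ Π_i = μ_i·Π_i for i = 1,2,3, where μ₁ = α₀, μ₂ = α₀ + α₂, μ₃ = α₀ + (2(m−1)/m)·α₂. Equivalently, Y₂∘Π₁ = 0, Y₂∘Π₂ = (1/2)Π₂, and Y₂∘Π₃ = ((m−1)/m)Π₃. -/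
/-!
Write `q φ = ⟨ξ, φξ⟩` and `P = Y₂ id = ξξᵀ/|ξ|² − id/m`. The matrix `Y₂φ` depends linearly on
`φ`, and only through the vector `φξ`; moreover `(Y₂φ)ξ = ψξ` for `ψ = ½ φ + (½ − 1/m)(q φ/|ξ|²) id`
and `Y₅φ = (q φ/|ξ|²) P`. Hence `Y₂Y₂ = ½ Y₂ + (½ − 1/m) Y₅` and `Y₂Y₅ = (1 − 1/m) Y₅`, and the
eigen-relations for `Π₁, Π₂, Π₃` reduce to identities between scalar coefficients.
-/

open Matrix

namespace NLT

/-- `|ξ|²`, the squared Euclidean norm of `ξ ∈ ℝ^m`. -/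
noncomputable def nsq {m : ℕ} (ξ : Fin m → ℝ) : ℝ := ∑ i, ξ i ^ 2

/-- `(X₁φ)_{αβ} = δ_{αβ} tr φ`. -/
noncomputable def X1 {m : ℕ} (φ : Matrix (Fin m) (Fin m) ℝ) : Matrix (Fin m) (Fin m) ℝ :=
  Matrix.of fun α β => (if α = β then (1 : ℝ) else 0) * φ.trace

/-- `(X₂φ)_{αβ} = (1/(2|ξ|²)) (ξ_α (φξ)_β + ξ_β (φξ)_α)`. -/
noncomputable def X2 {m : ℕ} (ξ : Fin m → ℝ) (φ : Matrix (Fin m) (Fin m) ℝ) :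
    Matrix (Fin m) (Fin m) ℝ :=
  Matrix.of fun α β => (1 / (2 * nsq ξ)) * (ξ α * φ.mulVec ξ β + ξ β * φ.mulVec ξ α)

/-- `(X₃φ)_{αβ} = (1/|ξ|²) ξ_α ξ_β tr φ`. -/
noncomputable def X3 {m : ℕ} (ξ : Fin m → ℝ) (φ : Matrix (Fin m) (Fin m) ℝ) :
    Matrix (Fin m) (Fin m) ℝ :=
  Matrix.of fun α β => (1 / nsq ξ) * (ξ α * ξ β * φ.trace)

/-- `(X₄φ)_{αβ} = (1/|ξ|²) δ_{αβ} ⟨ξ, φξ⟩`. -/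
noncomputable def X4 {m : ℕ} (ξ : Fin m → ℝ) (φ : Matrix (Fin m) (Fin m) ℝ) :
    Matrix (Fin m) (Fin m) ℝ :=
  Matrix.of fun α β => (1 / nsq ξ) * (if α = β then (1 : ℝ) else 0) * (ξ ⬝ᵥ φ.mulVec ξ)

/-- `(X₅φ)_{αβ} = (1/|ξ|⁴) ξ_α ξ_β ⟨ξ, φξ⟩`. -/
noncomputable def X5 {m : ℕ} (ξ : Fin m → ℝ) (φ : Matrix (Fin m) (Fin m) ℝ) :
    Matrix (Fin m) (Fin m) ℝ :=
  Matrix.of fun α β => (1 / (nsq ξ) ^ 2) * (ξ α * ξ β * (ξ ⬝ᵥ φ.mulVec ξ))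

/-- `Y₂ = X₂ − (1/m) X₄`, regarded on trace-free symmetric two-tensors. -/
noncomputable def Y2 {m : ℕ} (ξ : Fin m → ℝ) (φ : Matrix (Fin m) (Fin m) ℝ) :
    Matrix (Fin m) (Fin m) ℝ :=
  X2 ξ φ - ((1 : ℝ) / m) • X4 ξ φ

/-- `Y₅ = X₅ − (1/m) X₄`, regarded on trace-free symmetric two-tensors. -/
noncomputable def Y5 {m : ℕ} (ξ : Fin m → ℝ) (φ : Matrix (Fin m) (Fin m) ℝ) :
    Matrix (Fin m) (Fin m) ℝ :=
  X5 ξ φ - ((1 : ℝ) / m) • X4 ξ φ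

/-- `Π₁ = id − 2Y₂ + ((m−2)/(m−1)) Y₅`. -/
noncomputable def Pi1 {m : ℕ} (ξ : Fin m → ℝ) (φ : Matrix (Fin m) (Fin m) ℝ) :
    Matrix (Fin m) (Fin m) ℝ :=
  φ - (2 : ℝ) • Y2 ξ φ + (((m : ℝ) - 2) / ((m : ℝ) - 1)) • Y5 ξ φ

/-- `Π₂ = 2(Y₂ − Y₅)`. -/
noncomputable def Pi2 {m : ℕ} (ξ : Fin m → ℝ) (φ : Matrix (Fin m) (Fin m) ℝ) :
    Matrix (Fin m) (Fin m) ℝ :=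
  (2 : ℝ) • (Y2 ξ φ - Y5 ξ φ)

/-- `Π₃ = (m/(m−1)) Y₅`. -/
noncomputable def Pi3 {m : ℕ} (ξ : Fin m → ℝ) (φ : Matrix (Fin m) (Fin m) ℝ) :
    Matrix (Fin m) (Fin m) ℝ :=
  ((m : ℝ) / ((m : ℝ) - 1)) • Y5 ξ φ

variable {m : ℕ}

section Identities

variable (ξ : Fin m → ℝ)

lemma nsq_eq_dotProduct : nsq ξ = ξ ⬝ᵥ ξ := by
  simp [nsq, dotProduct, sq]

lemma X2_eq_smul_vecMulVec (φ : Matrix (Fin m) (Fin m) ℝ) :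
    X2 ξ φ = (1 / (2 * nsq ξ)) • (vecMulVec ξ (φ *ᵥ ξ) + vecMulVec (φ *ᵥ ξ) ξ) := by
  ext α β
  simp [X2, vecMulVec_apply, mul_comm]

lemma X4_eq_smul_one (φ : Matrix (Fin m) (Fin m) ℝ) :
    X4 ξ φ = ((ξ ⬝ᵥ φ *ᵥ ξ) / nsq ξ) • (1 : Matrix (Fin m) (Fin m) ℝ) := by
  ext α β
  simp [X4, one_apply, div_eq_inv_mul]

lemma X5_eq_smul_vecMulVec (φ : Matrix (Fin m) (Fin m) ℝ) :
    X5 ξ φ = ((ξ ⬝ᵥ φ *ᵥ ξ) / nsq ξ ^ 2) • vecMulVec ξ ξ := by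
  ext α β
  simp only [X5, one_div, of_apply, Matrix.smul_apply, vecMulVec_apply, smul_eq_mul]
  ring

lemma Y2_add (ψ ψ' : Matrix (Fin m) (Fin m) ℝ) : Y2 ξ (ψ + ψ') = Y2 ξ ψ + Y2 ξ ψ' := by
  simp only [Y2, X2_eq_smul_vecMulVec, X4_eq_smul_one, add_mulVec, dotProduct_add,
    vecMulVec_add, add_vecMulVec]
  module

lemma Y2_smul (c : ℝ) (ψ : Matrix (Fin m) (Fin m) ℝ) : Y2 ξ (c • ψ) = c • Y2 ξ ψ := by
  simp only [Y2, X2_eq_smul_vecMulVec, X4_eq_smul_one, smul_mulVec, dotProduct_smul,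
    vecMulVec_smul, smul_vecMulVec, smul_eq_mul]
  module

lemma Y2_sub (ψ ψ' : Matrix (Fin m) (Fin m) ℝ) : Y2 ξ (ψ - ψ') = Y2 ξ ψ - Y2 ξ ψ' := by
  rw [sub_eq_add_neg, ← neg_one_smul ℝ ψ', Y2_add, Y2_smul, neg_one_smul, sub_eq_add_neg]

end Identities

variable {ξ : Fin m → ℝ}

lemma nsq_ne_zero (hξ : ξ ≠ 0) : nsq ξ ≠ 0 := by
  rw [nsq_eq_dotProduct]
  exact mt dotProduct_self_eq_zero.1 hξ

lemma Y2_congr {ψ ψ' : Matrix (Fin m) (Fin m) ℝ} (h : ψ *ᵥ ξ = ψ' *ᵥ ξ) :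
    Y2 ξ ψ = Y2 ξ ψ' := by
  simp only [Y2, X2, X4, h]

lemma mulVec_Y2 (hξ : ξ ≠ 0) (φ : Matrix (Fin m) (Fin m) ℝ) :
    Y2 ξ φ *ᵥ ξ = (1 / 2 : ℝ) • φ *ᵥ ξ + ((1 / 2 - 1 / m) * (ξ ⬝ᵥ φ *ᵥ ξ) / nsq ξ) • ξ := by
  have hn := nsq_ne_zero hξ
  simp only [Y2, X2_eq_smul_vecMulVec, X4_eq_smul_one, sub_mulVec, smul_mulVec, add_mulVec,
    vecMulVec_mulVec, one_mulVec, op_smul_eq_smul, dotProduct_comm (φ *ᵥ ξ) ξ,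
    ← nsq_eq_dotProduct]
  match_scalars <;> field_simp

lemma Y5_eq_smul_Y2_one (hξ : ξ ≠ 0) (φ : Matrix (Fin m) (Fin m) ℝ) :
    Y5 ξ φ = ((ξ ⬝ᵥ φ *ᵥ ξ) / nsq ξ) • Y2 ξ 1 := by
  have hn := nsq_ne_zero hξ
  simp only [Y5, Y2, X2_eq_smul_vecMulVec, X4_eq_smul_one, X5_eq_smul_vecMulVec, one_mulVec,
    ← nsq_eq_dotProduct]
  match_scalars
  · field_simp
    ring
  · field_simp

lemma Y2_Y2 (hξ : ξ ≠ 0) (φ : Matrix (Fin m) (Fin m) ℝ) :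
    Y2 ξ (Y2 ξ φ) = (1 / 2 : ℝ) • Y2 ξ φ + (1 / 2 - 1 / m : ℝ) • Y5 ξ φ := by
  have h : Y2 ξ φ *ᵥ ξ
      = ((1 / 2 : ℝ) • φ + ((1 / 2 - 1 / m) * (ξ ⬝ᵥ φ *ᵥ ξ) / nsq ξ) • 1) *ᵥ ξ := by
    rw [mulVec_Y2 hξ, add_mulVec, smul_mulVec, smul_mulVec, one_mulVec]
  rw [Y2_congr h, Y2_add, Y2_smul, Y2_smul, Y5_eq_smul_Y2_one hξ]
  module

lemma Y2_Y2_one (hξ : ξ ≠ 0) : Y2 ξ (Y2 ξ 1) = (1 - 1 / m : ℝ) • Y2 ξ 1 := by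
  have hY5 : Y5 ξ 1 = Y2 ξ 1 := by
    rw [Y5_eq_smul_Y2_one hξ, one_mulVec, ← nsq_eq_dotProduct, div_self (nsq_ne_zero hξ),
      one_smul]
  rw [Y2_Y2 hξ, hY5]
  module

lemma Y2_Y5 (hξ : ξ ≠ 0) (φ : Matrix (Fin m) (Fin m) ℝ) :
    Y2 ξ (Y5 ξ φ) = (1 - 1 / m : ℝ) • Y5 ξ φ := by
  rw [Y5_eq_smul_Y2_one hξ, Y2_smul, Y2_Y2_one hξ, smul_comm]

lemma Y2_Pi1 (hm : 2 ≤ m) (hξ : ξ ≠ 0) (φ : Matrix (Fin m) (Fin m) ℝ) :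
    Y2 ξ (Pi1 ξ φ) = 0 := by
  have hm1 : (m : ℝ) - 1 ≠ 0 := by
    have : (2 : ℝ) ≤ m := by exact_mod_cast hm
    linarith
  have hm0 : (m : ℝ) ≠ 0 := by positivity
  rw [Pi1, Y2_add, Y2_sub, Y2_smul, Y2_smul, Y2_Y2 hξ, Y2_Y5 hξ]
  match_scalars <;> field_simp <;> ring

lemma Y2_Pi2 (hξ : ξ ≠ 0) (φ : Matrix (Fin m) (Fin m) ℝ) :
    Y2 ξ (Pi2 ξ φ) = (1 / 2 : ℝ) • Pi2 ξ φ := by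
  rw [Pi2, Y2_smul, Y2_sub, Y2_Y2 hξ, Y2_Y5 hξ]
  module

lemma Y2_Pi3 (hm : m ≠ 0) (hξ : ξ ≠ 0) (φ : Matrix (Fin m) (Fin m) ℝ) :
    Y2 ξ (Pi3 ξ φ) = (((m : ℝ) - 1) / m) • Pi3 ξ φ := by
  rw [Pi3, Y2_smul, Y2_Y5 hξ, smul_comm, one_sub_div (Nat.cast_ne_zero.2 hm)]

theorem symbol_eigenvalues_general (m : ℕ) (hm : 2 ≤ m) (ξ : Fin m → ℝ) (hξ : ξ ≠ 0)
    (α₀ α₂ : ℝ) (φ : Matrix (Fin m) (Fin m) ℝ) :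
    (α₀ • Pi1 ξ φ + (2 * α₂) • Y2 ξ (Pi1 ξ φ) = α₀ • Pi1 ξ φ ∧
     α₀ • Pi2 ξ φ + (2 * α₂) • Y2 ξ (Pi2 ξ φ) = (α₀ + α₂) • Pi2 ξ φ ∧
     α₀ • Pi3 ξ φ + (2 * α₂) • Y2 ξ (Pi3 ξ φ)
        = (α₀ + (2 * ((m : ℝ) - 1) / m) * α₂) • Pi3 ξ φ) ∧
    (Y2 ξ (Pi1 ξ φ) = 0 ∧
     Y2 ξ (Pi2 ξ φ) = (1 / 2 : ℝ) • Pi2 ξ φ ∧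
     Y2 ξ (Pi3 ξ φ) = (((m : ℝ) - 1) / m) • Pi3 ξ φ) := by
  have h1 := Y2_Pi1 hm hξ φ
  have h2 := Y2_Pi2 hξ φ
  have h3 := Y2_Pi3 (by omega) hξ φ
  refine ⟨⟨?_, ?_, ?_⟩, h1, h2, h3⟩
  · rw [h1, smul_zero, add_zero]
  · rw [h2]
    module
  · rw [h3]
    module

/-- Eigenvalue decomposition of the general self-adjoint second-order leading symbol
`α₀·id + 2α₂·Y₂` on trace-free symmetric two-tensors: `(α₀·id + 2α₂·Y₂) ∘ Πᵢ = μᵢ·Πᵢ`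
with `μ₁ = α₀`, `μ₂ = α₀ + α₂`, `μ₃ = α₀ + (2(m−1)/m)·α₂`; equivalently
`Y₂Π₁ = 0`, `Y₂Π₂ = (1/2)Π₂`, `Y₂Π₃ = ((m−1)/m)Π₃`. -/
theorem symbol_eigenvalues (m : ℕ) (hm : 2 ≤ m) (ξ : Fin m → ℝ) (hξ : ξ ≠ 0)
    (α₀ α₂ : ℝ) (φ : Matrix (Fin m) (Fin m) ℝ) (hφ : φ.IsSymm) (hφ0 : φ.trace = 0) :
    (α₀ • Pi1 ξ φ + (2 * α₂) • Y2 ξ (Pi1 ξ φ) = α₀ • Pi1 ξ φ ∧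
     α₀ • Pi2 ξ φ + (2 * α₂) • Y2 ξ (Pi2 ξ φ) = (α₀ + α₂) • Pi2 ξ φ ∧
     α₀ • Pi3 ξ φ + (2 * α₂) • Y2 ξ (Pi3 ξ φ)
        = (α₀ + (2 * ((m : ℝ) - 1) / m) * α₂) • Pi3 ξ φ) ∧
    (Y2 ξ (Pi1 ξ φ) = 0 ∧
     Y2 ξ (Pi2 ξ φ) = (1 / 2 : ℝ) • Pi2 ξ φ ∧
     Y2 ξ (Pi3 ξ φ) = (((m : ℝ) - 1) / m) • Pi3 ξ φ) :=
  symbol_eigenvalues_general m hm ξ hξ α₀ α₂ φ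

end NLT
end

section
/- One-parameter family of complementary projections: for every real θ, the operators Z₊ := (1/2)(1 + cos θ)Π₃ + (1/2)(sin θ)(T + T†) + (1/2)(1 − cos θ)(id − P) and Z₋ := (1/2)(1 − cos θ)Π₃ − (1/2)(sin θ)(T + T†) + (1/2)(1 + cos θ)(id − P) satisfy Z₊² = Z₊, Z₋² = Z₋, Z₊Z₋ = Z₋Z₊ = 0, and Z₊ + Z₋ = Π₃ + (id − P). -/
set_option maxHeartbeats 1000000


open Matrix

namespace NLT

/-- `P = id − (1/m) X₁`, the projection onto trace-free part. -/
noncomputable def P {m : ℕ} (φ : Matrix (Fin m) (Fin m) ℝ) : Matrix (Fin m) (Fin m) ℝ :=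
  φ - ((1 : ℝ) / m) • X1 φ

/-- `T = (1/√(m−1)) (X₃ − (1/m) X₁)`. -/
noncomputable def T {m : ℕ} (ξ : Fin m → ℝ) (φ : Matrix (Fin m) (Fin m) ℝ) :
    Matrix (Fin m) (Fin m) ℝ :=
  (1 / Real.sqrt ((m : ℝ) - 1)) • (X3 ξ φ - ((1 : ℝ) / m) • X1 φ)

/-- `T† = (1/√(m−1)) (X₄ − (1/m) X₁)`. -/
noncomputable def Td {m : ℕ} (ξ : Fin m → ℝ) (φ : Matrix (Fin m) (Fin m) ℝ) :
    Matrix (Fin m) (Fin m) ℝ :=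
  (1 / Real.sqrt ((m : ℝ) - 1)) • (X4 ξ φ - ((1 : ℝ) / m) • X1 φ)

/-- `Π₃ = (m/(m−1)) P X₅ P`. -/
noncomputable def Pi3A {m : ℕ} (ξ : Fin m → ℝ) (φ : Matrix (Fin m) (Fin m) ℝ) :
    Matrix (Fin m) (Fin m) ℝ :=
  ((m : ℝ) / ((m : ℝ) - 1)) • P (X5 ξ (P φ))

/-- `Z₊(θ) = ((1+cos θ)/2) Π₃ + (sin θ/2)(T + T†) + ((1−cos θ)/2)(id − P)`. -/
noncomputable def Zp {m : ℕ} (ξ : Fin m → ℝ) (θ : ℝ) (φ : Matrix (Fin m) (Fin m) ℝ) :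
    Matrix (Fin m) (Fin m) ℝ :=
  ((1 + Real.cos θ) / 2) • Pi3A ξ φ + (Real.sin θ / 2) • (T ξ φ + Td ξ φ)
    + ((1 - Real.cos θ) / 2) • (φ - P φ)

/-- `Z₋(θ) = ((1−cos θ)/2) Π₃ − (sin θ/2)(T + T†) + ((1+cos θ)/2)(id − P)`. -/
noncomputable def Zm {m : ℕ} (ξ : Fin m → ℝ) (θ : ℝ) (φ : Matrix (Fin m) (Fin m) ℝ) :
    Matrix (Fin m) (Fin m) ℝ :=
  ((1 - Real.cos θ) / 2) • Pi3A ξ φ - (Real.sin θ / 2) • (T ξ φ + Td ξ φ)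
    + ((1 + Real.cos θ) / 2) • (φ - P φ)

noncomputable def Mm {m : ℕ} (ξ : Fin m → ℝ) (A B : ℝ) : Matrix (Fin m) (Fin m) ℝ :=
  Matrix.of fun α β => A * (if α = β then (1:ℝ) else 0) + B * (ξ α * ξ β)

lemma Mm_congr {m : ℕ} (ξ : Fin m → ℝ) {A B A' B' : ℝ} (hA : A = A') (hB : B = B') :
    Mm ξ A B = Mm ξ A' B' := by rw [hA, hB]

lemma Mm_zero {m : ℕ} (ξ : Fin m → ℝ) : Mm ξ 0 0 = 0 := by
  ext α β; simp [Mm]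

lemma trace_Mm {m : ℕ} (ξ : Fin m → ℝ) (A B : ℝ) :
    (Mm ξ A B).trace = A * m + B * nsq ξ := by
  simp [Matrix.trace, Mm, Matrix.diag, Finset.sum_add_distrib, Finset.mul_sum, nsq, sq,
    mul_comm]

lemma mulVec_Mm {m : ℕ} (ξ : Fin m → ℝ) (A B : ℝ) :
    (Mm ξ A B).mulVec ξ = fun α => (A + B * nsq ξ) * ξ α := by
  funext α
  simp only [Mm, Matrix.mulVec, dotProduct, Matrix.of_apply, add_mul, Finset.sum_add_distrib,
    ite_mul, one_mul, zero_mul]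
  rw [Finset.sum_congr rfl (fun x _ => by rw [show (A * if α = x then (1:ℝ) else 0) * ξ x = (if α = x then A * ξ x else 0) by split <;> ring])]
  rw [Finset.sum_ite_eq]
  simp only [Finset.mem_univ, if_true]
  rw [show ∑ x, B * (ξ α * ξ x) * ξ x = B * ξ α * ∑ x, ξ x ^2 by
    rw [Finset.mul_sum]; congr 1; funext x; ring]
  rw [← nsq]; ring

lemma quad_Mm {m : ℕ} (ξ : Fin m → ℝ) (A B : ℝ) :
    ξ ⬝ᵥ (Mm ξ A B).mulVec ξ = A * nsq ξ + B * (nsq ξ)^2 := by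
  rw [mulVec_Mm]
  simp only [dotProduct]
  rw [show ∑ x, ξ x * ((A + B * nsq ξ) * ξ x) = (A + B * nsq ξ) * ∑ x, ξ x ^2 by
    rw [Finset.mul_sum]; congr 1; funext x; ring]
  rw [← nsq]; ring

lemma X1_eq {m : ℕ} (ξ : Fin m → ℝ) (φ : Matrix (Fin m) (Fin m) ℝ) :
    X1 φ = Mm ξ φ.trace 0 := by
  ext α β; by_cases h : α = β <;> simp [X1, Mm, h] <;> ring

lemma X3_eq {m : ℕ} (ξ : Fin m → ℝ) (φ : Matrix (Fin m) (Fin m) ℝ) :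
    X3 ξ φ = Mm ξ 0 (φ.trace / nsq ξ) := by
  ext α β; by_cases h : α = β <;> simp [X3, Mm, h] <;> ring

lemma X4_eq {m : ℕ} (ξ : Fin m → ℝ) (φ : Matrix (Fin m) (Fin m) ℝ) :
    X4 ξ φ = Mm ξ ((ξ ⬝ᵥ φ.mulVec ξ) / nsq ξ) 0 := by
  ext α β; by_cases h : α = β <;> simp [X4, Mm, h] <;> ring

lemma X5_eq {m : ℕ} (ξ : Fin m → ℝ) (φ : Matrix (Fin m) (Fin m) ℝ) :
    X5 ξ φ = Mm ξ 0 ((ξ ⬝ᵥ φ.mulVec ξ) / (nsq ξ)^2) := by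
  ext α β; by_cases h : α = β <;> simp [X5, Mm, h] <;> ring

lemma smul_Mm {m : ℕ} (ξ : Fin m → ℝ) (r A B : ℝ) :
    r • Mm ξ A B = Mm ξ (r*A) (r*B) := by
  ext α β; by_cases h : α = β <;> simp [Mm, h] <;> ring

lemma add_Mm {m : ℕ} (ξ : Fin m → ℝ) (A B A' B' : ℝ) :
    Mm ξ A B + Mm ξ A' B' = Mm ξ (A+A') (B+B') := by
  ext α β; by_cases h : α = β <;> simp [Mm, h] <;> ring

lemma sub_Mm {m : ℕ} (ξ : Fin m → ℝ) (A B A' B' : ℝ) :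
    Mm ξ A B - Mm ξ A' B' = Mm ξ (A-A') (B-B') := by
  ext α β; by_cases h : α = β <;> simp [Mm, h] <;> ring

lemma P_Mm {m : ℕ} (ξ : Fin m → ℝ) (A B : ℝ) :
    P (Mm ξ A B) = Mm ξ (A - (1/m) * (A*m + B*nsq ξ)) B := by
  rw [P, X1_eq ξ, trace_Mm, smul_Mm, sub_Mm]; exact Mm_congr ξ (by ring) (by ring)

lemma quad_P {m : ℕ} (ξ : Fin m → ℝ) (φ : Matrix (Fin m) (Fin m) ℝ) :
    ξ ⬝ᵥ (P φ).mulVec ξ = ξ ⬝ᵥ φ.mulVec ξ - (1/m) * φ.trace * nsq ξ := by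
  rw [P, Matrix.sub_mulVec, Matrix.smul_mulVec, dotProduct_sub, dotProduct_smul,
    X1_eq ξ, quad_Mm]
  simp only [smul_eq_mul]; ring

lemma trace_P {m : ℕ} [NeZero m] (ξ : Fin m → ℝ) (φ : Matrix (Fin m) (Fin m) ℝ) :
    (P φ).trace = φ.trace - (1/m) * (φ.trace * m) := by
  rw [P, Matrix.trace_sub, Matrix.trace_smul, X1_eq ξ, trace_Mm]
  simp only [smul_eq_mul]; ring


noncomputable def ZcA (mr s c C S t q : ℝ) : ℝ :=
  ((1+C)/2) * (mr/(mr-1) * (0 - (1/mr)*(0*mr + ((q - (1/mr)*t*s)/s^2)*s)))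
  + (S/2) * ((1/c)*(0 - (1/mr)*t) + (1/c)*(q/s - (1/mr)*t))
  + ((1-C)/2) * ((1/mr)*t)

noncomputable def ZcB (mr s c C S t q : ℝ) : ℝ :=
  ((1+C)/2) * (mr/(mr-1) * ((q - (1/mr)*t*s)/s^2))
  + (S/2) * ((1/c)*(t/s))

lemma Zp_eq {m : ℕ} (ξ : Fin m → ℝ) (θ : ℝ) (φ : Matrix (Fin m) (Fin m) ℝ) :
    Zp ξ θ φ = Mm ξ
      (ZcA m (nsq ξ) (Real.sqrt ((m:ℝ)-1)) (Real.cos θ) (Real.sin θ) φ.trace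
        (ξ ⬝ᵥ φ.mulVec ξ))
      (ZcB m (nsq ξ) (Real.sqrt ((m:ℝ)-1)) (Real.cos θ) (Real.sin θ) φ.trace
        (ξ ⬝ᵥ φ.mulVec ξ)) := by
  rw [Zp, Pi3A, X5_eq, quad_P,
    show φ - P φ = ((1:ℝ)/(m:ℝ)) • X1 φ from by rw [P]; exact sub_sub_cancel _ _,
    T, Td, X3_eq, X4_eq, X1_eq ξ, P_Mm]
  simp only [smul_Mm, sub_Mm, add_Mm]
  exact Mm_congr ξ (by rw [ZcA]; try ring) (by rw [ZcB]; try ring)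

lemma Zm_eq {m : ℕ} (ξ : Fin m → ℝ) (θ : ℝ) (φ : Matrix (Fin m) (Fin m) ℝ) :
    Zm ξ θ φ = Mm ξ
      (ZcA m (nsq ξ) (Real.sqrt ((m:ℝ)-1)) (-Real.cos θ) (-Real.sin θ) φ.trace
        (ξ ⬝ᵥ φ.mulVec ξ))
      (ZcB m (nsq ξ) (Real.sqrt ((m:ℝ)-1)) (-Real.cos θ) (-Real.sin θ) φ.trace
        (ξ ⬝ᵥ φ.mulVec ξ)) := by
  rw [Zm, Pi3A, X5_eq, quad_P,
    show φ - P φ = ((1:ℝ)/(m:ℝ)) • X1 φ from by rw [P]; exact sub_sub_cancel _ _,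
    T, Td, X3_eq, X4_eq, X1_eq ξ, P_Mm]
  simp only [smul_Mm, sub_Mm, add_Mm]
  exact Mm_congr ξ (by rw [ZcA]; try ring) (by rw [ZcB]; try ring)


lemma ZcA_comp (mr s c C S A B : ℝ) (hs : s ≠ 0) (hmr : mr ≠ 0) (hm1 : mr - 1 ≠ 0)
    (hc : c ≠ 0) :
    ZcA mr s c C S (A*mr + B*s) (A*s + B*s^2)
    = (-(S/(2*c)) + (1-C)/2) * A
      + ((-(1+C)/2 + (S/2)*(mr-2)/c + (1-C)/2) * (s/mr)) * B := by
  rw [ZcA]; field_simp; ring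

lemma ZcB_comp (mr s c C S A B : ℝ) (hs : s ≠ 0) (hmr : mr ≠ 0) (hm1 : mr - 1 ≠ 0)
    (hc : c ≠ 0) :
    ZcB mr s c C S (A*mr + B*s) (A*s + B*s^2)
    = ((S/2)*(mr/(c*s))) * A + ((1+C)/2 + S/(2*c)) * B := by
  rw [ZcB]; field_simp; ring
lemma keyAA (mr s c C S t q : ℝ) (hs : s ≠ 0) (hc : c ≠ 0) (hmr : mr ≠ 0)
    (hm1 : mr - 1 ≠ 0) (hc2 : c^2 = mr - 1) (hSC : S^2 = 1 - C^2) :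
    ZcA mr s c C S (ZcA mr s c C S t q * mr + ZcB mr s c C S t q * s)
      (ZcA mr s c C S t q * s + ZcB mr s c C S t q * s^2) = ZcA mr s c C S t q := by
  rw [ZcA_comp mr s c C S _ _ hs hmr hm1 hc]
  have h : mr = c^2 + 1 := by linarith
  subst h
  rw [ZcA, ZcB]
  have hcc : c^2 ≠ 0 := pow_ne_zero 2 hc
  have h2 : c^2 + 1 - 1 = c^2 := by ring
  rw [h2] at *
  field_simp
  ring_nf
  rw [hSC]
  ring
lemma keyBB (mr s c C S t q : ℝ) (hs : s ≠ 0) (hc : c ≠ 0) (hmr : mr ≠ 0)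
    (hm1 : mr - 1 ≠ 0) (hc2 : c^2 = mr - 1) (hSC : S^2 = 1 - C^2) :
    ZcB mr s c C S (ZcA mr s c C S t q * mr + ZcB mr s c C S t q * s)
      (ZcA mr s c C S t q * s + ZcB mr s c C S t q * s^2) = ZcB mr s c C S t q := by
  rw [ZcB_comp mr s c C S _ _ hs hmr hm1 hc]
  have h : mr = c^2 + 1 := by linarith
  subst h
  rw [ZcA, ZcB]
  have hcc : c^2 ≠ 0 := pow_ne_zero 2 hc
  have h2 : c^2 + 1 - 1 = c^2 := by ring
  rw [h2] at *
  field_simp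
  ring_nf
  rw [hSC]
  ring

lemma keyA0 (mr s c C S t q : ℝ) (hs : s ≠ 0) (hc : c ≠ 0) (hmr : mr ≠ 0)
    (hm1 : mr - 1 ≠ 0) (hc2 : c^2 = mr - 1) (hSC : S^2 = 1 - C^2) :
    ZcA mr s c C S
      (ZcA mr s c (-C) (-S) t q * mr + ZcB mr s c (-C) (-S) t q * s)
      (ZcA mr s c (-C) (-S) t q * s + ZcB mr s c (-C) (-S) t q * s^2) = 0 := by
  rw [ZcA_comp mr s c C S _ _ hs hmr hm1 hc]
  have h : mr = c^2 + 1 := by linarith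
  subst h
  rw [ZcA, ZcB]
  have hcc : c^2 ≠ 0 := pow_ne_zero 2 hc
  have h2 : c^2 + 1 - 1 = c^2 := by ring
  rw [h2] at *
  field_simp
  ring_nf
  rw [hSC]
  ring

lemma keyB0 (mr s c C S t q : ℝ) (hs : s ≠ 0) (hc : c ≠ 0) (hmr : mr ≠ 0)
    (hm1 : mr - 1 ≠ 0) (hc2 : c^2 = mr - 1) (hSC : S^2 = 1 - C^2) :
    ZcB mr s c C S
      (ZcA mr s c (-C) (-S) t q * mr + ZcB mr s c (-C) (-S) t q * s)
      (ZcA mr s c (-C) (-S) t q * s + ZcB mr s c (-C) (-S) t q * s^2) = 0 := by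
  rw [ZcB_comp mr s c C S _ _ hs hmr hm1 hc]
  have h : mr = c^2 + 1 := by linarith
  subst h
  rw [ZcA, ZcB]
  have hcc : c^2 ≠ 0 := pow_ne_zero 2 hc
  have h2 : c^2 + 1 - 1 = c^2 := by ring
  rw [h2] at *
  field_simp
  ring_nf
  rw [hSC]
  ring

lemma keyA0' (mr s c C S t q : ℝ) (hs : s ≠ 0) (hc : c ≠ 0) (hmr : mr ≠ 0)
    (hm1 : mr - 1 ≠ 0) (hc2 : c^2 = mr - 1) (hSC : S^2 = 1 - C^2) :
    ZcA mr s c (-C) (-S)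
      (ZcA mr s c C S t q * mr + ZcB mr s c C S t q * s)
      (ZcA mr s c C S t q * s + ZcB mr s c C S t q * s^2) = 0 := by
  have h := keyA0 mr s c (-C) (-S) t q hs hc hmr hm1 hc2 (by simpa [neg_sq] using hSC)
  simpa [neg_neg] using h

lemma keyB0' (mr s c C S t q : ℝ) (hs : s ≠ 0) (hc : c ≠ 0) (hmr : mr ≠ 0)
    (hm1 : mr - 1 ≠ 0) (hc2 : c^2 = mr - 1) (hSC : S^2 = 1 - C^2) :
    ZcB mr s c (-C) (-S)
      (ZcA mr s c C S t q * mr + ZcB mr s c C S t q * s)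
      (ZcA mr s c C S t q * s + ZcB mr s c C S t q * s^2) = 0 := by
  have h := keyB0 mr s c (-C) (-S) t q hs hc hmr hm1 hc2 (by simpa [neg_sq] using hSC)
  simpa [neg_neg] using h

/-- main -/
theorem Z_family (m : ℕ) (hm : 2 ≤ m) (ξ : Fin m → ℝ) (hξ : ξ ≠ 0) (θ : ℝ)
    (φ : Matrix (Fin m) (Fin m) ℝ) (hφ : φ.IsSymm) :
    Zp ξ θ (Zp ξ θ φ) = Zp ξ θ φ ∧
    Zm ξ θ (Zm ξ θ φ) = Zm ξ θ φ ∧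
    Zp ξ θ (Zm ξ θ φ) = 0 ∧
    Zm ξ θ (Zp ξ θ φ) = 0 ∧
    Zp ξ θ φ + Zm ξ θ φ = Pi3A ξ φ + (φ - P φ) := by
  have hs : nsq ξ ≠ 0 := by
    have h0 : ξ ⬝ᵥ ξ ≠ 0 := by simpa using hξ
    rw [show nsq ξ = ξ ⬝ᵥ ξ from by simp [nsq, dotProduct, sq]]
    exact h0
  have hm2 : (2:ℝ) ≤ (m:ℝ) := by exact_mod_cast hm
  have hmR : (m:ℝ) ≠ 0 := by linarith
  have hm1 : (m:ℝ) - 1 ≠ 0 := by linarith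
  have hc2 : (Real.sqrt ((m:ℝ)-1))^2 = (m:ℝ) - 1 := Real.sq_sqrt (by linarith)
  have hc : Real.sqrt ((m:ℝ)-1) ≠ 0 := by
    intro h; rw [h] at hc2; simp at hc2; linarith
  have hSC : (Real.sin θ)^2 = 1 - (Real.cos θ)^2 := Real.sin_sq θ
  have hSC' : (-Real.sin θ)^2 = 1 - (-Real.cos θ)^2 := by simpa [neg_sq] using hSC
  refine ⟨?_, ?_, ?_, ?_, ?_⟩
  · rw [Zp_eq ξ θ φ, Zp_eq ξ θ (Mm ξ _ _), trace_Mm, quad_Mm]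
    exact Mm_congr ξ (keyAA _ _ _ _ _ _ _ hs hc hmR hm1 hc2 hSC)
      (keyBB _ _ _ _ _ _ _ hs hc hmR hm1 hc2 hSC)
  · rw [Zm_eq ξ θ φ, Zm_eq ξ θ (Mm ξ _ _), trace_Mm, quad_Mm]
    exact Mm_congr ξ (keyAA _ _ _ _ _ _ _ hs hc hmR hm1 hc2 hSC')
      (keyBB _ _ _ _ _ _ _ hs hc hmR hm1 hc2 hSC')
  · rw [Zm_eq ξ θ φ, Zp_eq ξ θ (Mm ξ _ _), trace_Mm, quad_Mm, ← Mm_zero ξ]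
    exact Mm_congr ξ (keyA0 _ _ _ _ _ _ _ hs hc hmR hm1 hc2 hSC)
      (keyB0 _ _ _ _ _ _ _ hs hc hmR hm1 hc2 hSC)
  · rw [Zp_eq ξ θ φ, Zm_eq ξ θ (Mm ξ _ _), trace_Mm, quad_Mm, ← Mm_zero ξ]
    exact Mm_congr ξ (keyA0' _ _ _ _ _ _ _ hs hc hmR hm1 hc2 hSC)
      (keyB0' _ _ _ _ _ _ _ hs hc hmR hm1 hc2 hSC)
  · rw [Zp, Zm]
    ext α β
    simp only [Matrix.add_apply, Matrix.sub_apply, Matrix.smul_apply, smul_eq_mul]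
    ring

end NLT
end
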